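/- arXiv:1504.00948 — 2 statements merged into one kernel-verified Lean document; each statement's English description precedes it below -/
import Mathlib

section
/- Let S = UΛU' where U ∈ R^{n×r} has orthonormal columns and Λ ∈ R^{r×r} is a diagonal matrix with nonzero diagonal entries. Let ΔS = PΣP' be a symmetric matrix with P ∈ R^{n×s} orthonormal columns and Σ diagonal. Suppose [U, Q]R is a QR-type decomposition with [U, Q] having orthonormal columns and R upper triangular such that [U, P] = [U, Q]R. If Z = R·diag(Λ, Σ)·R' has eigendecomposition Z = VLV', then S + ΔS = ([U, Q]V) L ([U, Q]V)' and [U, Q]V has orthonormal columns; i.e., this gives an exact eigendecomposition of S + ΔS. -/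
open Matrix BigOperators

/-- Correctness of the incremental eigen-update: given `S = UΛUᵀ`, a symmetric low-rank update
`ΔS = PΣPᵀ`, a QR-type decomposition `[U, P] = [U, Q]R` with `[U, Q]` orthonormal and `R`
upper triangular, and an eigendecomposition `Z = R diag(Λ,Σ) Rᵀ = V L Vᵀ`, the matrix
`[U, Q]V` has orthonormal columns and `S + ΔS = ([U,Q]V) L ([U,Q]V)ᵀ`. -/
theorem eigen_update_correct {n r s : ℕ}
    (U : Matrix (Fin n) (Fin r) ℝ) (Lam : Fin r → ℝ)
    (hU : Uᵀ * U = 1) (hLam : ∀ i, Lam i ≠ 0)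
    (S : Matrix (Fin n) (Fin n) ℝ) (hS : S = U * diagonal Lam * Uᵀ)
    (P : Matrix (Fin n) (Fin s) ℝ) (Sig : Fin s → ℝ)
    (hP : Pᵀ * P = 1)
    (ΔS : Matrix (Fin n) (Fin n) ℝ) (hΔS : ΔS = P * diagonal Sig * Pᵀ)
    (Q : Matrix (Fin n) (Fin s) ℝ)
    (R : Matrix (Fin r ⊕ Fin s) (Fin r ⊕ Fin s) ℝ)
    (hUQ : (fromCols U Q)ᵀ * fromCols U Q = 1)
    (hQR : fromCols U P = fromCols U Q * R)
    (hRtri : ∀ a b : Fin r ⊕ Fin s,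
      Sum.elim (fun i : Fin r => (i : ℕ)) (fun j : Fin s => r + (j : ℕ)) b <
        Sum.elim (fun i : Fin r => (i : ℕ)) (fun j : Fin s => r + (j : ℕ)) a → R a b = 0)
    (Z : Matrix (Fin r ⊕ Fin s) (Fin r ⊕ Fin s) ℝ)
    (hZ : Z = R * fromBlocks (diagonal Lam) 0 0 (diagonal Sig) * Rᵀ)
    (V : Matrix (Fin r ⊕ Fin s) (Fin r ⊕ Fin s) ℝ) (L : Fin r ⊕ Fin s → ℝ)
    (hV : Vᵀ * V = 1) (hZeig : Z = V * diagonal L * Vᵀ) :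
    (fromCols U Q * V)ᵀ * (fromCols U Q * V) = 1 ∧
      S + ΔS = (fromCols U Q * V) * diagonal L * (fromCols U Q * V)ᵀ := by
  have key : S + ΔS = fromCols U Q * V * diagonal L * Vᵀ * (fromCols U Q)ᵀ := by
    have h1 : S + ΔS =
        fromCols U P * fromBlocks (diagonal Lam) 0 0 (diagonal Sig) * (fromCols U P)ᵀ := by
      rw [hS, hΔS, fromCols_mul_fromBlocks, transpose_fromCols, fromCols_mul_fromRows]
      simp [Matrix.mul_assoc]
    rw [h1, hQR, transpose_mul, ← Matrix.mul_assoc, Matrix.mul_assoc _ R,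
      Matrix.mul_assoc _ (R * _), ← hZ, hZeig]
    simp [Matrix.mul_assoc]
  refine ⟨?_, ?_⟩
  · rw [transpose_mul, Matrix.mul_assoc, ← Matrix.mul_assoc (fromCols U Q)ᵀ, hUQ,
      Matrix.one_mul, hV]
  · rw [key, transpose_mul]; simp [Matrix.mul_assoc]
end

section
/- Let S_t and S_{t+1} be symmetric positive definite matrices (embedding S_t into the larger index set of S_{t+1} by zero-padding as S̃_t), let Ŝ_t = Ũ_tΛ_tŨ_t' be a rank-r eigendecomposition approximation of S̃_t, and let ΔS = S_{t+1} − S̃_t. Define w = S_{t+1}^{-1}Y and ŵ = (Ũ_tΛ_tŨ_t' + ΔS)^{-1}Y (both matrices assumed invertible). If δ = ‖(Ũ_tΛ_tŨ_t' + ΔS)^{-1}(S̃_t − Ũ_tΛ_tŨ_t')‖_F < 1, then ‖w − ŵ‖_2 ≤ (‖(Ũ_tΛ_tŨ_t' + ΔS)^{-1}‖_F^2 · ‖S̃_t − Ũ_tΛ_tŨ_t'‖_F / (1 − δ)) ‖Y‖_2. -/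
open Matrix BigOperators

noncomputable def frobNorm {m n : Type*} [Fintype m] [Fintype n] (M : Matrix m n ℝ) : ℝ :=
  Real.sqrt (∑ i, ∑ j, (M i j) ^ 2)

noncomputable def vecNorm {n : Type*} [Fintype n] (v : n → ℝ) : ℝ :=
  Real.sqrt (∑ i, (v i) ^ 2)

attribute [local instance] Matrix.frobeniusNormedAddCommGroup

lemma frobNorm_eq {m n : Type*} [Fintype m] [Fintype n] (M : Matrix m n ℝ) :
    frobNorm M = ‖M‖ := by
  rw [frobNorm, Matrix.frobenius_norm_def, Real.sqrt_eq_rpow]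
  congr 1
  simp [Real.rpow_two, Real.norm_eq_abs, sq_abs]

lemma vecNorm_eq {n : Type*} [Fintype n] (v : n → ℝ) :
    vecNorm v = ‖(WithLp.equiv 2 (n → ℝ)).symm v‖ := by
  rw [vecNorm, EuclideanSpace.norm_eq]
  simp [Real.norm_eq_abs, sq_abs]

lemma vecNorm_nonneg {n : Type*} [Fintype n] (v : n → ℝ) : 0 ≤ vecNorm v :=
  Real.sqrt_nonneg _

lemma frobNorm_nonneg {m n : Type*} [Fintype m] [Fintype n] (M : Matrix m n ℝ) :
    0 ≤ frobNorm M := Real.sqrt_nonneg _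

lemma vecNorm_neg {n : Type*} [Fintype n] (v : n → ℝ) : vecNorm (-v) = vecNorm v := by
  simp [vecNorm]

lemma vecNorm_add_le {n : Type*} [Fintype n] (v w : n → ℝ) :
    vecNorm (v + w) ≤ vecNorm v + vecNorm w := by
  simp only [vecNorm_eq]
  rw [show (WithLp.equiv 2 (n → ℝ)).symm (v + w)
      = (WithLp.equiv 2 (n → ℝ)).symm v + (WithLp.equiv 2 (n → ℝ)).symm w from rfl]
  exact norm_add_le _ _

lemma vecNorm_mulVec_le {m n : Type*} [Fintype m] [Fintype n]
    (M : Matrix m n ℝ) (v : n → ℝ) :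
    vecNorm (M *ᵥ v) ≤ frobNorm M * vecNorm v := by
  have h1 : vecNorm (M *ᵥ v) = ‖Matrix.replicateCol Unit (M *ᵥ v)‖ := by
    rw [Matrix.frobenius_norm_replicateCol, vecNorm_eq]; rfl
  have h2 : vecNorm v = ‖Matrix.replicateCol Unit v‖ := by
    rw [Matrix.frobenius_norm_replicateCol, vecNorm_eq]; rfl
  rw [h1, h2, Matrix.replicateCol_mulVec, frobNorm_eq]
  exact Matrix.frobenius_norm_mul M _

/-- Error bound for the fast incremental update: with `S̃ₜ` the (zero-padded) old matrix,
`Ŝₜ = ŨₜΛₜŨₜᵀ` its rank-`r` eigen-approximation, `ΔS = Sₜ₊₁ − S̃ₜ`, `w = Sₜ₊₁⁻¹Y` and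
`ŵ = (Ŝₜ + ΔS)⁻¹Y`, if `δ = ‖(Ŝₜ + ΔS)⁻¹(S̃ₜ − Ŝₜ)‖_F < 1` then
`‖w − ŵ‖₂ ≤ (‖(Ŝₜ + ΔS)⁻¹‖_F² ‖S̃ₜ − Ŝₜ‖_F / (1 − δ)) ‖Y‖₂`. -/
theorem fast_update_error_bound {n r : ℕ}
    (St1 Stilde : Matrix (Fin n) (Fin n) ℝ)
    (hSt1 : St1.PosDef) (hStilde : Stilde.PosSemidef)
    (Ut : Matrix (Fin n) (Fin r) ℝ) (Lam : Fin r → ℝ)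
    (hUt : Utᵀ * Ut = 1)
    (Shat : Matrix (Fin n) (Fin n) ℝ) (hShat : Shat = Ut * diagonal Lam * Utᵀ)
    (ΔS : Matrix (Fin n) (Fin n) ℝ) (hΔS : ΔS = St1 - Stilde)
    (hCinv : IsUnit (Shat + ΔS).det)
    (Y : Fin n → ℝ)
    (w what : Fin n → ℝ)
    (hw : w = St1⁻¹ *ᵥ Y) (hwhat : what = (Shat + ΔS)⁻¹ *ᵥ Y)
    (hδ : frobNorm ((Shat + ΔS)⁻¹ * (Stilde - Shat)) < 1) :
    vecNorm (w - what) ≤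
      frobNorm (Shat + ΔS)⁻¹ ^ 2 * frobNorm (Stilde - Shat) /
        (1 - frobNorm ((Shat + ΔS)⁻¹ * (Stilde - Shat))) * vecNorm Y := by
  set C := Shat + ΔS with hC
  set E := Stilde - Shat with hE
  set K := C⁻¹ * E with hK
  have hdet1 : IsUnit St1.det := isUnit_iff_ne_zero.mpr hSt1.det_pos.ne'
  have hwY : St1 *ᵥ w = Y := by
    rw [hw, Matrix.mulVec_mulVec, Matrix.mul_nonsing_inv _ hdet1, Matrix.one_mulVec]
  have hwhatY : C *ᵥ what = Y := by
    rw [hwhat, Matrix.mulVec_mulVec, Matrix.mul_nonsing_inv _ hCinv, Matrix.one_mulVec]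
  -- key identity: w - what = -(K *ᵥ w)
  have h1 : C *ᵥ (w - what) = (-E) *ᵥ w := by
    rw [Matrix.mulVec_sub, hwhatY, ← hwY, ← Matrix.sub_mulVec]
    congr 1
    rw [hC, hE, hΔS]; abel
  have key : w - what = -(K *ᵥ w) := by
    calc w - what = C⁻¹ *ᵥ (C *ᵥ (w - what)) := by
          rw [Matrix.mulVec_mulVec, Matrix.nonsing_inv_mul _ hCinv, Matrix.one_mulVec]
      _ = -(K *ᵥ w) := by
          rw [h1, Matrix.mulVec_mulVec, hK, Matrix.mul_neg, Matrix.neg_mulVec]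
  -- split K *ᵥ w = K *ᵥ (w - what) + K *ᵥ what
  have hsplit : K *ᵥ w = K *ᵥ (w - what) + K *ᵥ what := by
    rw [← Matrix.mulVec_add, sub_add_cancel]
  have step : vecNorm (w - what) ≤
      frobNorm K * vecNorm (w - what) + vecNorm (K *ᵥ what) := by
    conv_lhs => rw [key]
    rw [vecNorm_neg, hsplit]
    exact le_trans (vecNorm_add_le _ _)
      (add_le_add_left (vecNorm_mulVec_le _ _) _)
  have step2 : vecNorm (K *ᵥ what) ≤
      frobNorm C⁻¹ * (frobNorm E * (frobNorm C⁻¹ * vecNorm Y)) := by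
    have e1 : K *ᵥ what = C⁻¹ *ᵥ (E *ᵥ what) := by
      rw [Matrix.mulVec_mulVec]
    rw [e1]
    refine le_trans (vecNorm_mulVec_le _ _) ?_
    refine mul_le_mul_of_nonneg_left ?_ (frobNorm_nonneg _)
    refine le_trans (vecNorm_mulVec_le _ _) ?_
    refine mul_le_mul_of_nonneg_left ?_ (frobNorm_nonneg _)
    rw [hwhat]
    exact vecNorm_mulVec_le _ _
  have hpos : 0 < 1 - frobNorm K := by linarith
  rw [div_mul_eq_mul_div, le_div_iff₀ hpos]
  nlinarith [step, step2, vecNorm_nonneg (w - what)]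
end
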